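/- arXiv:2407.05078 — 4 statements merged into one kernel-verified Lean document; each statement's English description precedes it below -/
import Mathlib

section
/- Let k be a natural number and let b₁, …, b_{k+1} be pairwise distinct real numbers. Then the k+1 real polynomials (X + bᵢ)^k, i = 1, …, k+1, are linearly independent over ℝ and span the space of real polynomials of degree at most k. -/
open Polynomial

/-- For pairwise distinct reals `b₁, …, b_{k+1}`, the polynomials `(X + bᵢ)^k` are
linearly independent over `ℝ` and span the space of real polynomials of degree at most `k`. -/
theorem shifted_powers_basis (k : ℕ) (b : Fin (k + 1) → ℝ) (hb : Function.Injective b) :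
    LinearIndependent ℝ (fun i : Fin (k + 1) => (Polynomial.X + Polynomial.C (b i)) ^ k) ∧
      Submodule.span ℝ
          (Set.range fun i : Fin (k + 1) => (Polynomial.X + Polynomial.C (b i)) ^ k) =
        Polynomial.degreeLE ℝ (k : ℕ) := by
  set v : Fin (k + 1) → ℝ[X] := fun i => (X + C (b i)) ^ k with hv
  have hli : LinearIndependent ℝ v := by
    rw [Fintype.linearIndependent_iff]
    intro c hc
    have hcoeff : ∀ e : Fin (k + 1), ∑ i, c i * b i ^ (e : ℕ) = 0 := by
      intro e
      have h1 : ((∑ i, c i • v i).coeff (k - (e : ℕ))) = 0 := by rw [hc]; simp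
      have h2 : ∀ i, (c i • v i).coeff (k - (e : ℕ))
          = (c i * b i ^ (e : ℕ)) * (k.choose (k - (e : ℕ)) : ℝ) := by
        intro i
        have he : (e : ℕ) ≤ k := Nat.lt_succ_iff.mp e.2
        rw [coeff_smul, hv, coeff_X_add_C_pow, Nat.sub_sub_self he]
        simp [smul_eq_mul]; ring
      rw [finset_sum_coeff] at h1
      simp_rw [h2, ← Finset.sum_mul] at h1
      exact (mul_eq_zero.mp h1).resolve_right (by
        exact_mod_cast Nat.choose_pos (Nat.sub_le k (e : ℕ)) |>.ne')
    have := Matrix.eq_zero_of_forall_pow_sum_mul_pow_eq_zero hb hcoeff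
    exact fun i => congrFun this i
  refine ⟨hli, ?_⟩
  have hmem : ∀ i, v i ∈ degreeLE ℝ (k : ℕ) := by
    intro i
    rw [mem_degreeLE, degree_pow, degree_X_add_C]
    simp
  set V := degreeLE ℝ (k : ℕ)
  have hfd : FiniteDimensional ℝ V ∧ Module.finrank ℝ V = k + 1 := by
    have : V = degreeLT ℝ (k + 1) := (degreeLT_succ_eq_degreeLE).symm
    rw [this]
    have e := degreeLTEquiv ℝ (k + 1)
    constructor
    · exact Module.Finite.equiv e.symm
    · rw [e.finrank_eq]; simp
  obtain ⟨hfdV, hfr⟩ := hfd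
  set w : Fin (k + 1) → V := fun i => ⟨v i, hmem i⟩ with hw
  have hliw : LinearIndependent ℝ w := by
    apply LinearIndependent.of_comp V.subtype
    convert hli
    funext i; rfl
  have hspanw : Submodule.span ℝ (Set.range w) = ⊤ :=
    hliw.span_eq_top_of_card_eq_finrank (by simp [hfr])
  have : Submodule.map V.subtype (Submodule.span ℝ (Set.range w)) = V := by
    rw [hspanw, Submodule.map_top, Submodule.range_subtype]
  rw [← this, Submodule.map_span]
  congr 1
  ext p
  simp only [Set.mem_image, Set.mem_range]
  constructor
  · rintro ⟨i, rfl⟩; exact ⟨w i, ⟨i, rfl⟩, rfl⟩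
  · rintro ⟨_, ⟨i, rfl⟩, rfl⟩; exact ⟨i, rfl⟩
end

section
/- Let d, k ≥ 1 be integers and let G denote the gauge (Minkowski functional) of the closure in L²(Ω) of the convex hull of P_k ∪ (−P_k). If M ∈ ℝ satisfies G(p) ≤ M · ‖p‖_{L²(Ω)} for every (L²(Ω)-class of a) real polynomial function p : ℝ^d → ℝ of total degree at most k, then M ≥ 2^{−k} · d^{−k/2}. -/
open MeasureTheory
open scoped RealInnerProductSpace

noncomputable section

/-- The unit cube `Ω = [0,1]^d` in `ℝ^d`. -/
def unitCube (d : ℕ) : Set (EuclideanSpace ℝ (Fin d)) :=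
  {x | ∀ i, x i ∈ Set.Icc (0 : ℝ) 1}

/-- Lebesgue measure restricted to the unit cube. -/
def cubeMeasure (d : ℕ) : Measure (EuclideanSpace ℝ (Fin d)) :=
  volume.restrict (unitCube d)

/-- The RePU dictionary `P_k ⊂ L²(Ω)`: classes of `x ↦ σ_k(w·x + b)` with
`‖w‖₂ = 1` and `|b| ≤ √d`. -/
def reluDict (d k : ℕ) : Set (Lp ℝ 2 (cubeMeasure d)) :=
  {g | ∃ (w : EuclideanSpace ℝ (Fin d)) (b : ℝ), ‖w‖ = 1 ∧ |b| ≤ Real.sqrt d ∧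
    (g : EuclideanSpace ℝ (Fin d) → ℝ) =ᵐ[cubeMeasure d]
      fun x => (max 0 (⟪w, x⟫ + b)) ^ k}

lemma unitCube_eq (d : ℕ) : unitCube d =
    (MeasurableEquiv.toLp 2 (Fin d → ℝ)).symm ⁻¹' (Set.univ.pi fun _ => Set.Icc (0:ℝ) 1) := by
  ext x
  simp only [unitCube, Set.mem_preimage, Set.mem_pi, Set.mem_univ, forall_true_left,
    Set.mem_setOf_eq]
  rfl

lemma measurableSet_unitCube (d : ℕ) : MeasurableSet (unitCube d) := by
  rw [unitCube_eq]
  exact (MeasurableEquiv.toLp 2 (Fin d → ℝ)).symm.measurable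
    (MeasurableSet.univ_pi fun i => measurableSet_Icc)

lemma volume_unitCube (d : ℕ) : volume (unitCube d) = 1 := by
  rw [unitCube_eq,
    (EuclideanSpace.volume_preserving_symm_measurableEquiv_toLp (Fin d)).measure_preimage
      (MeasurableSet.univ_pi fun i => measurableSet_Icc).nullMeasurableSet]
  have : (Set.univ.pi fun _ : Fin d => Set.Icc (0:ℝ) 1) =
      Set.pi Set.univ fun _ => Set.Icc (0:ℝ) 1 := rfl
  rw [this, volume_pi_pi]
  simp

instance (d : ℕ) : IsFiniteMeasure (cubeMeasure d) := by
  constructor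
  rw [cubeMeasure, Measure.restrict_apply_univ, volume_unitCube]
  exact ENNReal.one_lt_top

lemma norm_le_sqrt_of_mem_unitCube {d : ℕ} {x : EuclideanSpace ℝ (Fin d)}
    (hx : x ∈ unitCube d) : ‖x‖ ≤ Real.sqrt d := by
  rw [EuclideanSpace.norm_eq]
  apply Real.sqrt_le_sqrt
  calc ∑ i, ‖x i‖ ^ 2 ≤ ∑ _i : Fin d, (1:ℝ) := by
        apply Finset.sum_le_sum
        intro i _
        have h := hx i
        have : |x i| ≤ 1 := abs_le.2 ⟨by linarith [h.1], h.2⟩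
        calc ‖x i‖ ^ 2 = |x i| ^ 2 := rfl
          _ ≤ 1 ^ 2 := by exact pow_le_pow_left₀ (abs_nonneg _) this 2
          _ = 1 := one_pow 2
    _ = d := by simp

lemma pt_bound {d k : ℕ} {w : EuclideanSpace ℝ (Fin d)} {b : ℝ}
    (hw : ‖w‖ = 1) (hb : |b| ≤ Real.sqrt d) :
    ∀ᵐ x ∂cubeMeasure d, ‖(max 0 (⟪w, x⟫ + b)) ^ k‖ ≤ (2 * Real.sqrt d) ^ k := by
  filter_upwards [ae_restrict_mem (measurableSet_unitCube d)] with x hx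
  have h1 : |⟪w, x⟫| ≤ Real.sqrt d := by
    calc |⟪w, x⟫| ≤ ‖w‖ * ‖x‖ := abs_real_inner_le_norm w x
      _ = ‖x‖ := by rw [hw, one_mul]
      _ ≤ Real.sqrt d := norm_le_sqrt_of_mem_unitCube hx
  have h2 : max 0 (⟪w, x⟫ + b) ≤ 2 * Real.sqrt d := by
    have : ⟪w, x⟫ + b ≤ 2 * Real.sqrt d := by
      have := abs_le.1 h1
      have := abs_le.1 hb
      linarith
    exact max_le (by positivity) this
  have h0 : (0:ℝ) ≤ max 0 (⟪w, x⟫ + b) := le_max_left _ _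
  rw [Real.norm_eq_abs, abs_pow, abs_of_nonneg h0]
  exact pow_le_pow_left₀ h0 h2 k

lemma cubeMeasure_univ (d : ℕ) : cubeMeasure d Set.univ = 1 := by
  rw [cubeMeasure, Measure.restrict_apply_univ, volume_unitCube]

lemma measureUnivNNReal_cube (d : ℕ) : measureUnivNNReal (cubeMeasure d) = 1 := by
  have := coe_measureUnivNNReal (cubeMeasure d)
  rw [cubeMeasure_univ] at this
  exact_mod_cast this

lemma lp_norm_le {d k : ℕ} {g : Lp ℝ 2 (cubeMeasure d)}
    (h : ∀ᵐ x ∂cubeMeasure d, ‖(g : EuclideanSpace ℝ (Fin d) → ℝ) x‖ ≤ (2 * Real.sqrt d) ^ k) :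
    ‖g‖ ≤ (2 * Real.sqrt d) ^ k := by
  have hC : (0:ℝ) ≤ (2 * Real.sqrt d) ^ k := by positivity
  have := Lp.norm_le_of_ae_bound hC h
  rwa [measureUnivNNReal_cube, NNReal.coe_one, Real.one_rpow, one_mul] at this

lemma dict_norm_le {d k : ℕ} {g : Lp ℝ 2 (cubeMeasure d)}
    (hg : g ∈ reluDict d k ∪ -reluDict d k) : ‖g‖ ≤ (2 * Real.sqrt d) ^ k := by
  rcases hg with hg | hg
  · obtain ⟨w, b, hw, hb, hae⟩ := hg
    apply lp_norm_le
    filter_upwards [hae, pt_bound hw hb] with x h1 h2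
    rw [h1]; exact h2
  · rw [Set.mem_neg] at hg
    obtain ⟨w, b, hw, hb, hae⟩ := hg
    rw [← norm_neg]
    apply lp_norm_le
    filter_upwards [hae, pt_bound hw hb] with x h1 h2
    rw [h1]; exact h2

lemma hull_norm_le {d k : ℕ} {g : Lp ℝ 2 (cubeMeasure d)}
    (hg : g ∈ closure (convexHull ℝ (reluDict d k ∪ -reluDict d k))) :
    ‖g‖ ≤ (2 * Real.sqrt d) ^ k := by
  have h1 : reluDict d k ∪ -reluDict d k ⊆ Metric.closedBall 0 ((2 * Real.sqrt d) ^ k) := by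
    intro h hh
    rw [Metric.mem_closedBall, dist_zero_right]
    exact dict_norm_le hh
  have h2 := closure_minimal (convexHull_min h1 (convex_closedBall _ _))
    Metric.isClosed_closedBall
  have := h2 hg
  rwa [Metric.mem_closedBall, dist_zero_right] at this

lemma gauge_ge {d k : ℕ} {g : Lp ℝ 2 (cubeMeasure d)} (hd : 1 ≤ d)
    (hg : g ∈ closure (convexHull ℝ (reluDict d k ∪ -reluDict d k))) :
    ‖g‖ / (2 * Real.sqrt d) ^ k ≤
      gauge (closure (convexHull ℝ (reluDict d k ∪ -reluDict d k))) g := by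
  set S := closure (convexHull ℝ (reluDict d k ∪ -reluDict d k))
  have hC : (0:ℝ) < (2 * Real.sqrt d) ^ k := by
    have : (0:ℝ) < Real.sqrt d := Real.sqrt_pos.2 (by exact_mod_cast Nat.pos_of_ne_zero (by omega))
    positivity
  rw [gauge_def]
  apply le_csInf
  · exact ⟨1, Set.mem_Ioi.mpr zero_lt_one, ⟨g, hg, one_smul ℝ g⟩⟩
  · rintro t ⟨ht, hgt⟩
    obtain ⟨y, hy, rfl⟩ := hgt
    rw [div_le_iff₀ hC]
    calc ‖t • y‖ = |t| * ‖y‖ := by rw [norm_smul, Real.norm_eq_abs]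
      _ = t * ‖y‖ := by rw [abs_of_pos ht]
      _ ≤ t * (2 * Real.sqrt d) ^ k := by
          exact mul_le_mul_of_nonneg_left (hull_norm_le hy) ht.le

/-- If `M` bounds the gauge of the closed convex hull of `P_k ∪ (−P_k)` against the
`L²(Ω)` norm on all (classes of) polynomial functions of total degree at most `k`,
then `M ≥ 2^{-k} d^{-k/2}`. -/
theorem gauge_poly_bound_lower (d k : ℕ) (hd : 1 ≤ d) (hk : 1 ≤ k) (M : ℝ)
    (hM : ∀ (P : MvPolynomial (Fin d) ℝ), P.totalDegree ≤ k →
      ∀ g : Lp ℝ 2 (cubeMeasure d),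
        (g : EuclideanSpace ℝ (Fin d) → ℝ) =ᵐ[cubeMeasure d]
            (fun x => MvPolynomial.eval (fun i => x i) P) →
          gauge (closure (convexHull ℝ (reluDict d k ∪ -reluDict d k))) g ≤ M * ‖g‖) :
    (2 : ℝ) ^ (-(k : ℝ)) * (d : ℝ) ^ (-((k : ℝ) / 2)) ≤ M := by
  have hdpos : (0:ℝ) < d := by exact_mod_cast Nat.pos_of_ne_zero (by omega)
  have hsq : (1:ℝ) ≤ Real.sqrt d := by
    rw [show (1:ℝ) = Real.sqrt 1 by simp]
    exact Real.sqrt_le_sqrt (by exact_mod_cast hd)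
  set C : ℝ := (2 * Real.sqrt d) ^ k with hCdef
  have hC : (0:ℝ) < C := by positivity
  -- the witness function
  set i0 : Fin d := ⟨0, hd⟩ with hi0
  set w₀ : EuclideanSpace ℝ (Fin d) := EuclideanSpace.single i0 (1:ℝ) with hw0
  have hw : ‖w₀‖ = 1 := by rw [hw0, EuclideanSpace.norm_single]; simp
  have hb : |Real.sqrt d| ≤ Real.sqrt d := by
    rw [abs_of_nonneg (Real.sqrt_nonneg _)]
  set f : EuclideanSpace ℝ (Fin d) → ℝ :=
    fun x => (max 0 (⟪w₀, x⟫ + Real.sqrt d)) ^ k with hf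
  have hcont : Continuous f := by
    apply Continuous.pow
    exact continuous_const.max ((continuous_const.inner continuous_id).add continuous_const)
  have hmem : MemLp f 2 (cubeMeasure d) :=
    MemLp.of_bound hcont.aestronglyMeasurable C (pt_bound hw hb)
  set g : Lp ℝ 2 (cubeMeasure d) := hmem.toLp f with hg
  have hgf : (g : EuclideanSpace ℝ (Fin d) → ℝ) =ᵐ[cubeMeasure d] f := MemLp.coeFn_toLp hmem
  -- g is in the dictionary
  have hgdict : g ∈ reluDict d k := ⟨w₀, Real.sqrt d, hw, hb, hgf⟩
  have hgS : g ∈ closure (convexHull ℝ (reluDict d k ∪ -reluDict d k)) :=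
    subset_closure (subset_convexHull ℝ _ (Or.inl hgdict))
  -- inner product with w₀ picks the coordinate
  have hinner : ∀ x : EuclideanSpace ℝ (Fin d), ⟪w₀, x⟫ = x i0 := by
    intro x
    rw [hw0, EuclideanSpace.inner_single_left]
    simp
  -- the polynomial
  set P : MvPolynomial (Fin d) ℝ :=
    (MvPolynomial.X i0 + MvPolynomial.C (Real.sqrt d)) ^ k with hP
  have hdeg : P.totalDegree ≤ k := by
    calc P.totalDegree ≤ k * (MvPolynomial.X i0 + MvPolynomial.C (Real.sqrt d)).totalDegree :=
          MvPolynomial.totalDegree_pow _ k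
      _ ≤ k * 1 := by
          apply Nat.mul_le_mul_left
          refine (MvPolynomial.totalDegree_add _ _).trans ?_
          simp [MvPolynomial.totalDegree_X, MvPolynomial.totalDegree_C]
      _ = k := mul_one k
  have heval : (g : EuclideanSpace ℝ (Fin d) → ℝ) =ᵐ[cubeMeasure d]
      (fun x => MvPolynomial.eval (fun i => x i) P) := by
    filter_upwards [hgf, ae_restrict_mem (measurableSet_unitCube d)] with x h1 h2
    rw [h1, hf, hP]
    simp only [map_pow, MvPolynomial.eval_add, MvPolynomial.eval_X, MvPolynomial.eval_C]
    congr 1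
    rw [hinner x, max_eq_right]
    have := (h2 i0).1
    linarith [Real.sqrt_nonneg (d:ℝ)]
  -- g is nonzero
  have hcube_ne : cubeMeasure d ≠ 0 := by
    intro h0
    have := cubeMeasure_univ d
    rw [h0] at this; simp at this
  have hgne : g ≠ 0 := by
    intro h0
    have hz : f =ᵐ[cubeMeasure d] 0 := by
      filter_upwards [hgf, Lp.coeFn_zero ℝ 2 (cubeMeasure d)] with x h1 h2
      rw [← h1, h0, h2]
    have hpos : ∀ᵐ x ∂cubeMeasure d, f x ≠ 0 := by
      filter_upwards [ae_restrict_mem (measurableSet_unitCube d)] with x hx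
      rw [hf]
      have h1 : (0:ℝ) < ⟪w₀, x⟫ + Real.sqrt d := by
        rw [hinner x]; have := (hx i0).1; linarith
      have : (0:ℝ) < max 0 (⟪w₀, x⟫ + Real.sqrt d) := lt_max_of_lt_right h1
      positivity
    have : ∀ᵐ x ∂cubeMeasure d, False := by
      filter_upwards [hz, hpos] with x h1 h2
      exact h2 h1
    rw [ae_iff] at this
    simp only [not_false_eq_true, Set.setOf_true] at this
    exact hcube_ne (Measure.measure_univ_eq_zero.mp this)
  have hgnorm : (0:ℝ) < ‖g‖ := by
    rw [norm_pos_iff]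
    · exact hgne
  -- put it together
  have h1 := hM P hdeg g heval
  have h2 := gauge_ge hd hgS
  have h3 : ‖g‖ / C ≤ M * ‖g‖ := le_trans h2 h1
  have h4 : (1:ℝ) / C ≤ M := by
    rw [div_le_iff₀ hC] at h3 ⊢
    nlinarith [h3, hgnorm, hC]
  -- arithmetic
  have harith : (2 : ℝ) ^ (-(k : ℝ)) * (d : ℝ) ^ (-((k : ℝ) / 2)) = 1 / C := by
    rw [Real.rpow_neg (by norm_num : (0:ℝ) ≤ 2), Real.rpow_neg hdpos.le, ← mul_inv, one_div,
      hCdef, mul_pow]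
    congr 1
    rw [Real.rpow_natCast]
    congr 1
    rw [Real.sqrt_eq_rpow, ← Real.rpow_natCast ((d:ℝ) ^ ((1:ℝ)/2)) k, ← Real.rpow_mul hdpos.le]
    congr 1
    ring
  rw [harith]
  exact h4
end
end

section
/- For every integer k ≥ 1 there exists a constant C > 0, depending only on k (not on d), such that for every integer d ≥ 1 and every (w, b) ∈ ℝ^d × ℝ with ‖w‖₁ + |b| > 0, the L²(Ω)-equivalence class of the function x ↦ (‖w‖₁ + |b|)^{−k} · σ_k(w·x + b) lies in C · (closure in L²(Ω) of the convex hull of P_k ∪ (−P_k)). -/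
open MeasureTheory
open scoped RealInnerProductSpace Pointwise

noncomputable section

/-- The `ℓ¹` norm on `ℝ^d`. -/
def l1Norm {d : ℕ} (w : EuclideanSpace ℝ (Fin d)) : ℝ := ∑ i, |w i|

namespace RepuAux

lemma isCompact_unitCube (d : ℕ) : IsCompact (unitCube d) := by
  have : unitCube d = (EuclideanSpace.equiv (Fin d) ℝ) ⁻¹'
      Set.pi Set.univ (fun _ : Fin d => Set.Icc (0:ℝ) 1) := by
    ext x
    exact Set.mem_univ_pi.symm
  rw [this]
  exact (EuclideanSpace.equiv (Fin d) ℝ).toHomeomorph.isCompact_preimage.mpr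
    (isCompact_univ_pi fun _ => isCompact_Icc)

instance cubeFinite (d : ℕ) : IsFiniteMeasure (cubeMeasure d) := by
  constructor
  rw [cubeMeasure, Measure.restrict_apply_univ]
  exact (isCompact_unitCube d).measure_lt_top

lemma measurable_unitCube (d : ℕ) : MeasurableSet (unitCube d) :=
  (isCompact_unitCube d).isClosed.measurableSet

lemma cube_ae (d : ℕ) : unitCube d ∈ ae (cubeMeasure d) := by
  rw [cubeMeasure]
  exact self_mem_ae_restrict (measurable_unitCube d)

lemma norm_le_sqrt_of_mem {d : ℕ} {x : EuclideanSpace ℝ (Fin d)} (hx : x ∈ unitCube d) :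
    ‖x‖ ≤ Real.sqrt d := by
  rw [EuclideanSpace.norm_eq]
  apply Real.sqrt_le_sqrt
  calc ∑ i, ‖x i‖ ^ 2 ≤ ∑ _i : Fin d, (1:ℝ) := by
        refine Finset.sum_le_sum fun i _ => ?_
        have h := hx i
        rw [Real.norm_eq_abs]
        nlinarith [h.1, h.2, abs_of_nonneg h.1]
    _ = d := by simp

lemma l2_le_l1 {d : ℕ} (w : EuclideanSpace ℝ (Fin d)) : ‖w‖ ≤ l1Norm w := by
  rw [EuclideanSpace.norm_eq]
  have h : ∑ i, ‖w i‖ ^ 2 ≤ (l1Norm w) ^ 2 := by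
    simp only [Real.norm_eq_abs, l1Norm]
    exact Finset.sum_sq_le_sq_sum_of_nonneg fun i _ => abs_nonneg _
  calc Real.sqrt (∑ i, ‖w i‖ ^ 2) ≤ Real.sqrt ((l1Norm w)^2) := Real.sqrt_le_sqrt h
    _ = l1Norm w := Real.sqrt_sq (Finset.sum_nonneg fun i _ => abs_nonneg _)

lemma memDict {d : ℕ} (k : ℕ) (u : EuclideanSpace ℝ (Fin d)) (c : ℝ) :
    MemLp (fun x => (max 0 (⟪u, x⟫ + c)) ^ k) 2 (cubeMeasure d) := by
  have hcont : Continuous fun x : EuclideanSpace ℝ (Fin d) => (max 0 (⟪u, x⟫ + c)) ^ k :=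
    (continuous_const.max ((continuous_const.inner continuous_id).add continuous_const)).pow k
  refine MemLp.of_bound hcont.aestronglyMeasurable ((‖u‖ * Real.sqrt d + |c|) ^ k) ?_
  filter_upwards [cube_ae d] with x hx
  rw [Real.norm_eq_abs, abs_pow]
  apply pow_le_pow_left₀ (abs_nonneg _)
  rw [abs_of_nonneg (le_max_left _ _)]
  have h1 : |⟪u, x⟫| ≤ ‖u‖ * Real.sqrt d :=
    (abs_real_inner_le_norm u x).trans
      (mul_le_mul_of_nonneg_left (norm_le_sqrt_of_mem hx) (norm_nonneg _))
  have h2 : max 0 (⟪u, x⟫ + c) ≤ |⟪u, x⟫ + c| := by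
    rcases le_total (⟪u, x⟫ + c) 0 with h | h
    · rw [max_eq_left h]; exact abs_nonneg _
    · rw [max_eq_right h]; exact le_abs_self _
  calc max 0 (⟪u, x⟫ + c) ≤ |⟪u, x⟫ + c| := h2
    _ ≤ |⟪u, x⟫| + |c| := abs_add_le _ _
    _ ≤ ‖u‖ * Real.sqrt d + |c| := by linarith

lemma sum_mem_scaled_hull {E : Type*} [NormedAddCommGroup E] [NormedSpace ℝ E]
    (D : Set E) {g0 : E} (hg0 : g0 ∈ D) {ι : Type} [Fintype ι]
    (G : ι → E) (c : ι → ℝ) (hG : ∀ j, G j ∈ D ∪ -D)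
    {C : ℝ} (hC : 0 < C) (hsum : ∑ j, |c j| ≤ C) :
    (∑ j, c j • G j) ∈ C • closure (convexHull ℝ (D ∪ -D)) := by
  classical
  set S := D ∪ -D with hS
  have hg0S : g0 ∈ S := Set.mem_union_left _ hg0
  have hng0S : -g0 ∈ S := Set.mem_union_right _ (Set.neg_mem_neg.mpr hg0)
  set δ : ℝ := 1 - (∑ j, |c j|) / C with hδ
  have hδ0 : 0 ≤ δ := by
    have h1 : (∑ j, |c j|) / C ≤ 1 := (div_le_one hC).mpr hsum
    rw [hδ]; linarith
  set w : Option ι → ℝ := fun o => o.elim δ (fun j => |c j| / C) with hw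
  set p : Option ι → E := fun o => o.elim 0 (fun j => if 0 ≤ c j then G j else -G j) with hp
  have hzero : (0 : E) ∈ convexHull ℝ S := by
    have h := (convex_convexHull ℝ S) (subset_convexHull ℝ S hg0S)
      (subset_convexHull ℝ S hng0S) (by norm_num : (0:ℝ) ≤ 1/2) (by norm_num : (0:ℝ) ≤ 1/2)
      (by norm_num)
    rwa [smul_neg, add_neg_cancel] at h
  have hmem : (∑ o : Option ι, w o • p o) ∈ convexHull ℝ S := by
    apply (convex_convexHull ℝ S).sum_mem
    · intro o _
      cases o with
      | none => exact hδ0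
      | some j => exact div_nonneg (abs_nonneg _) hC.le
    · rw [Fintype.sum_option]
      simp only [Option.elim, w]
      rw [← Finset.sum_div]
      ring
    · intro o _
      cases o with
      | none => exact hzero
      | some j =>
        simp only [Option.elim, p]
        split_ifs
        · exact subset_convexHull ℝ S (hG j)
        · apply subset_convexHull ℝ S
          rw [hS]
          rcases hG j with h | h
          · exact Set.mem_union_right _ (Set.neg_mem_neg.mpr h)
          · exact Set.mem_union_left _ (by simpa using Set.neg_mem_neg.mpr h)
  have hrepr : (∑ o : Option ι, w o • p o) = C⁻¹ • ∑ j, c j • G j := by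
    rw [Fintype.sum_option]
    simp only [Option.elim, w, p, smul_zero, zero_add]
    rw [Finset.smul_sum]
    refine Finset.sum_congr rfl fun j _ => ?_
    rw [smul_smul]
    rcases le_or_gt 0 (c j) with h | h
    · rw [if_pos h, abs_of_nonneg h]; ring_nf
    · rw [if_neg (not_le.mpr h), abs_of_neg h, smul_neg, ← neg_smul]
      congr 1
      field_simp
  rw [hrepr] at hmem
  refine Set.mem_smul_set.mpr ⟨C⁻¹ • ∑ j, c j • G j, subset_closure hmem, ?_⟩
  rw [smul_smul, mul_inv_cancel₀ hC.ne', one_smul]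

lemma repu_id {k : ℕ} (hk : 1 ≤ k) (z : ℝ) :
    z ^ k = (max 0 z) ^ k + (-1 : ℝ) ^ k * (max 0 (-z)) ^ k := by
  rcases le_total z 0 with h | h
  · rw [max_eq_left h, max_eq_right (neg_nonneg.mpr h), zero_pow (by omega : k ≠ 0),
      ← neg_pow, neg_neg, zero_add]
  · rw [max_eq_right h, max_eq_left (neg_nonpos.mpr h), zero_pow (by omega : k ≠ 0),
      mul_zero, add_zero]

def nodes (k : ℕ) : Fin (k + 1) → ℝ := fun i => (i : ℝ) / k

lemma nodes_inj {k : ℕ} (hk : 1 ≤ k) : Function.Injective (nodes k) := by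
  intro i j h
  have hk' : (k : ℝ) ≠ 0 := Nat.cast_ne_zero.mpr (by omega)
  have : (i : ℝ) = (j : ℝ) := by
    simp only [nodes, div_left_inj' hk'] at h
    exact_mod_cast h
  exact Fin.ext (by exact_mod_cast this)

lemma nodes_mem {k : ℕ} (i : Fin (k + 1)) (hk : 1 ≤ k) : |nodes k i| ≤ 1 := by
  simp only [nodes]
  have h0 : (0:ℝ) ≤ (i:ℝ) / k := by positivity
  rw [abs_of_nonneg h0]
  rw [div_le_one (by exact_mod_cast hk : (0:ℝ) < k)]
  exact_mod_cast Nat.lt_succ_iff.mp i.isLt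

lemma poly_identity {k : ℕ} (t c : ℝ) (a : Fin (k + 1) → ℝ)
    (ha : ∀ m : Fin (k + 1), ∑ i, nodes k i ^ (m : ℕ) * a i = t ^ (k - (m : ℕ)) * c ^ (m : ℕ))
    (z : ℝ) :
    (t * z + c) ^ k = ∑ i, a i * (z + nodes k i) ^ k := by
  have key : ∀ m ∈ Finset.range (k + 1),
      ∑ i, a i * (z ^ m * nodes k i ^ (k - m) * (k.choose m : ℝ))
        = t ^ m * c ^ (k - m) * (k.choose m : ℝ) * z ^ m := by
    intro m hm
    have hmk : m ≤ k := Nat.lt_succ_iff.mp (Finset.mem_range.mp hm)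
    have h := ha ⟨k - m, by omega⟩
    simp only at h
    have hkm : k - (k - m) = m := by omega
    rw [hkm] at h
    calc ∑ i, a i * (z ^ m * nodes k i ^ (k - m) * (k.choose m : ℝ))
        = (z ^ m * (k.choose m : ℝ)) * ∑ i, nodes k i ^ (k - m) * a i := by
          rw [Finset.mul_sum]; exact Finset.sum_congr rfl fun i _ => by ring
      _ = (z ^ m * (k.choose m : ℝ)) * (t ^ m * c ^ (k - m)) := by rw [h]
      _ = t ^ m * c ^ (k - m) * (k.choose m : ℝ) * z ^ m := by ring
  calc (t * z + c) ^ k = ∑ m ∈ Finset.range (k + 1),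
        t ^ m * c ^ (k - m) * (k.choose m : ℝ) * z ^ m := by
        rw [add_pow]
        exact Finset.sum_congr rfl fun m _ => by rw [mul_pow]; ring
    _ = ∑ m ∈ Finset.range (k + 1),
        ∑ i, a i * (z ^ m * nodes k i ^ (k - m) * (k.choose m : ℝ)) :=
        (Finset.sum_congr rfl key).symm
    _ = ∑ i, ∑ m ∈ Finset.range (k + 1),
        a i * (z ^ m * nodes k i ^ (k - m) * (k.choose m : ℝ)) := Finset.sum_comm
    _ = ∑ i, a i * (z + nodes k i) ^ k := by
        refine Finset.sum_congr rfl fun i _ => ?_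
        rw [add_pow, Finset.mul_sum]

lemma vandermonde_solve (k : ℕ) (hk : 1 ≤ k) :
    ∃ K : ℝ, 0 ≤ K ∧ ∀ t c : ℝ, |t| ≤ 1 → |c| ≤ 1 →
      ∃ a : Fin (k + 1) → ℝ,
        (∀ m : Fin (k + 1), ∑ i, nodes k i ^ (m : ℕ) * a i = t ^ (k - (m : ℕ)) * c ^ (m : ℕ)) ∧
        ∑ i, |a i| ≤ K := by
  classical
  set M : Matrix (Fin (k + 1)) (Fin (k + 1)) ℝ :=
    Matrix.transpose (Matrix.vandermonde (nodes k)) with hM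
  have hdet : M.det ≠ 0 := by
    rw [hM, Matrix.det_transpose, Matrix.det_vandermonde]
    apply Finset.prod_ne_zero_iff.mpr
    intro i _
    apply Finset.prod_ne_zero_iff.mpr
    intro j hj
    have hij : i < j := Finset.mem_Ioi.mp hj
    exact sub_ne_zero_of_ne fun h => absurd ((nodes_inj hk h.symm)) (by
      intro hij'; exact absurd hij' (ne_of_lt hij))
  refine ⟨∑ i, ∑ m, |M⁻¹ i m|, Finset.sum_nonneg fun i _ =>
    Finset.sum_nonneg fun m _ => abs_nonneg _, ?_⟩
  intro t c ht hc
  set y : Fin (k + 1) → ℝ := fun m => t ^ (k - (m : ℕ)) * c ^ (m : ℕ) with hy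
  have hy1 : ∀ m, |y m| ≤ 1 := by
    intro m
    rw [hy]
    simp only [abs_mul, abs_pow]
    exact mul_le_one₀ (pow_le_one₀ (abs_nonneg _) ht) (by positivity)
      (pow_le_one₀ (abs_nonneg _) hc)
  refine ⟨M⁻¹.mulVec y, ?_, ?_⟩
  · have hMa : M.mulVec (M⁻¹.mulVec y) = y := by
      rw [Matrix.mulVec_mulVec, Matrix.mul_nonsing_inv M (isUnit_iff_ne_zero.mpr hdet),
        Matrix.one_mulVec]
    intro m
    have := congrFun hMa m
    simp only [Matrix.mulVec, dotProduct, hM, Matrix.transpose_apply,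
      Matrix.vandermonde_apply] at this ⊢
    convert this using 1
  · refine Finset.sum_le_sum fun i _ => ?_
    calc |M⁻¹.mulVec y i| = |∑ m, M⁻¹ i m * y m| := by
          simp [Matrix.mulVec, dotProduct]
      _ ≤ ∑ m, |M⁻¹ i m * y m| := Finset.abs_sum_le_sum_abs _ _
      _ ≤ ∑ m, |M⁻¹ i m| := by
          refine Finset.sum_le_sum fun m _ => ?_
          rw [abs_mul]
          exact mul_le_of_le_one_right (abs_nonneg _) (hy1 m)

lemma coeFn_sum_smul {d : ℕ} {ι : Type} (s : Finset ι) (c : ι → ℝ)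
    (G : ι → Lp ℝ 2 (cubeMeasure d)) :
    ⇑(∑ j ∈ s, c j • G j) =ᵐ[cubeMeasure d] fun x => ∑ j ∈ s, c j * (G j x) := by
  classical
  induction s using Finset.induction_on with
  | empty =>
    simp only [Finset.sum_empty]
    filter_upwards [Lp.coeFn_zero ℝ 2 (cubeMeasure d)] with x hx
    simpa using hx
  | insert j s' hj ih =>
    rw [Finset.sum_insert hj]
    filter_upwards [Lp.coeFn_add (c j • G j) (∑ i ∈ s', c i • G i),
      Lp.coeFn_smul (c j) (G j), ih] with x h1 h2 h3
    simp only [Pi.add_apply] at h1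
    rw [h1, h2, h3, Finset.sum_insert hj]
    simp [Pi.smul_apply, smul_eq_mul]

lemma rep_mem {d k : ℕ} (hd : 1 ≤ d) {ι : Type} [Fintype ι]
    (u : ι → EuclideanSpace ℝ (Fin d)) (β cf : ι → ℝ)
    (hu : ∀ j, ‖u j‖ = 1) (hβ : ∀ j, |β j| ≤ Real.sqrt d)
    {C : ℝ} (hC : 0 < C) (hsum : ∑ j, |cf j| ≤ C)
    (g : Lp ℝ 2 (cubeMeasure d))
    (hg : (g : EuclideanSpace ℝ (Fin d) → ℝ) =ᵐ[cubeMeasure d]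
      fun x => ∑ j, cf j * (max 0 (⟪u j, x⟫ + β j)) ^ k) :
    g ∈ C • closure (convexHull ℝ (reluDict d k ∪ -reluDict d k)) := by
  classical
  set G : ι → Lp ℝ 2 (cubeMeasure d) :=
    fun j => (memDict k (u j) (β j)).toLp _ with hG
  have hGmem : ∀ j, G j ∈ reluDict d k :=
    fun j => ⟨u j, β j, hu j, hβ j, MemLp.coeFn_toLp _⟩
  have hall : ∀ᵐ x ∂(cubeMeasure d), ∀ j,
      G j x = (max 0 (⟪u j, x⟫ + β j)) ^ k :=
    Filter.eventually_all.mpr fun j => MemLp.coeFn_toLp _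
  have hgeq : g = ∑ j, cf j • G j := by
    apply Lp.ext
    have h1 := coeFn_sum_smul (Finset.univ) cf G
    filter_upwards [hg, h1, hall] with x hx h1x hallx
    rw [hx, h1x]
    exact Finset.sum_congr rfl fun j _ => by rw [hallx j]
  rw [hgeq]
  have hg0 : (memDict k (EuclideanSpace.single (⟨0, hd⟩ : Fin d) (1:ℝ)) 0).toLp _
      ∈ reluDict d k :=
    ⟨EuclideanSpace.single (⟨0, hd⟩ : Fin d) (1:ℝ), 0,
      by rw [EuclideanSpace.norm_single]; norm_num,
      by rw [abs_zero]; exact Real.sqrt_nonneg _, MemLp.coeFn_toLp _⟩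
  exact sum_mem_scaled_hull (reluDict d k) hg0 G cf
    (fun j => Set.mem_union_left _ (hGmem j)) hC hsum

end RepuAux

open RepuAux

/-- For every `k ≥ 1` there is a constant `C > 0` depending only on `k` such that for all
`d ≥ 1` and all `(w, b)` with `‖w‖₁ + |b| > 0`, the `L²(Ω)`-class of
`x ↦ (‖w‖₁+|b|)^{-k} σ_k(w·x+b)` lies in `C` times the closed convex hull of
`P_k ∪ (−P_k)`. -/
theorem normalized_neuron_mem_scaled_hull (k : ℕ) (hk : 1 ≤ k) :
    ∃ C : ℝ, 0 < C ∧ ∀ (d : ℕ), 1 ≤ d → ∀ (w : EuclideanSpace ℝ (Fin d)) (b : ℝ),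
      0 < l1Norm w + |b| → ∀ g : Lp ℝ 2 (cubeMeasure d),
        (g : EuclideanSpace ℝ (Fin d) → ℝ) =ᵐ[cubeMeasure d]
            (fun x => (l1Norm w + |b|) ^ (-(k : ℤ)) * (max 0 (⟪w, x⟫ + b)) ^ k) →
          g ∈ C • closure (convexHull ℝ (reluDict d k ∪ -reluDict d k)) := by
  classical
  obtain ⟨K, hK0, hKsolve⟩ := vandermonde_solve k hk
  refine ⟨2 * K + 2, by linarith, ?_⟩
  intro d hd w b hs g hg
  set s : ℝ := l1Norm w + |b| with hsdef
  have hsinv : 0 < s⁻¹ := inv_pos.mpr hs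
  set v : EuclideanSpace ℝ (Fin d) := s⁻¹ • w with hv
  set c : ℝ := s⁻¹ * b with hc
  have htarget : ∀ x : EuclideanSpace ℝ (Fin d),
      s ^ (-(k:ℤ)) * (max 0 (⟪w, x⟫ + b)) ^ k = (max 0 (⟪v, x⟫ + c)) ^ k := by
    intro x
    have h1 : ⟪v, x⟫ = s⁻¹ * ⟪w, x⟫ := real_inner_smul_left w x s⁻¹
    have h2 : max 0 (⟪v, x⟫ + c) = s⁻¹ * max 0 (⟪w, x⟫ + b) := by
      rw [h1, hc, ← mul_add, mul_max_of_nonneg _ _ hsinv.le, mul_zero]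
    rw [h2, mul_pow]
    congr 1
    rw [zpow_neg, zpow_natCast, ← inv_pow]
  have hl1 : 0 ≤ l1Norm w := Finset.sum_nonneg fun i _ => abs_nonneg _
  set t : ℝ := ‖v‖ with htdef
  have ht0 : 0 ≤ t := norm_nonneg v
  have ht1 : t ≤ 1 := by
    have h1 : t = s⁻¹ * ‖w‖ := by
      rw [htdef, hv, norm_smul, Real.norm_eq_abs, abs_of_pos hsinv]
    have h2 : ‖w‖ ≤ l1Norm w := l2_le_l1 w
    have h3 : l1Norm w ≤ s := by rw [hsdef]; linarith [abs_nonneg b]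
    calc t = s⁻¹ * ‖w‖ := h1
      _ ≤ s⁻¹ * s := mul_le_mul_of_nonneg_left (h2.trans h3) hsinv.le
      _ = 1 := inv_mul_cancel₀ hs.ne'
  have hc1 : |c| ≤ 1 := by
    rw [hc, abs_mul, abs_of_pos hsinv]
    calc s⁻¹ * |b| ≤ s⁻¹ * s :=
          mul_le_mul_of_nonneg_left (by rw [hsdef]; linarith) hsinv.le
      _ = 1 := inv_mul_cancel₀ hs.ne'
  obtain ⟨u, hu, hvu⟩ : ∃ u : EuclideanSpace ℝ (Fin d), ‖u‖ = 1 ∧ v = t • u := by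
    by_cases hv0 : v = 0
    · refine ⟨EuclideanSpace.single (⟨0, hd⟩ : Fin d) (1:ℝ),
        by rw [EuclideanSpace.norm_single]; norm_num, ?_⟩
      rw [htdef, hv0, norm_zero, zero_smul]
    · refine ⟨‖v‖⁻¹ • v, norm_smul_inv_norm hv0, ?_⟩
      rw [htdef, smul_smul, mul_inv_cancel₀ (norm_ne_zero_iff.mpr hv0), one_smul]
  have hinner : ∀ x, ⟪v, x⟫ = t * ⟪u, x⟫ := fun x => by
    rw [hvu]; exact real_inner_smul_left u x t
  have hd1 : (1:ℝ) ≤ Real.sqrt d := Real.one_le_sqrt.mpr (by exact_mod_cast hd)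
  have hiub : ∀ x ∈ unitCube d, |⟪u, x⟫| ≤ Real.sqrt d := fun x hx =>
    (abs_real_inner_le_norm u x).trans (by rw [hu, one_mul]; exact norm_le_sqrt_of_mem hx)
  have hCpos : (0:ℝ) < 2 * K + 2 := by linarith
  by_cases hA : 0 < t ∧ |c| ≤ t * Real.sqrt d
  · obtain ⟨htpos, hcle⟩ := hA
    refine rep_mem hd (ι := Fin 1) (fun _ => u) (fun _ => c / t) (fun _ => t ^ k)
      (fun _ => hu) (fun _ => ?_) hCpos ?_ g ?_
    · rw [abs_div, abs_of_pos htpos, div_le_iff₀ htpos]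
      calc |c| ≤ t * Real.sqrt d := hcle
        _ = Real.sqrt d * t := mul_comm _ _
    · have hb2 : t ^ k ≤ 1 := pow_le_one₀ ht0 ht1
      rw [Fin.sum_univ_one, abs_of_nonneg (pow_nonneg ht0 _)]
      linarith
    · refine hg.trans (Filter.Eventually.of_forall fun x => ?_)
      show s ^ (-(k:ℤ)) * (max 0 (⟪w, x⟫ + b)) ^ k
          = ∑ _j : Fin 1, t ^ k * (max 0 (⟪u, x⟫ + c / t)) ^ k
      rw [Fin.sum_univ_one, htarget x, hinner x]
      have h4 : t * ⟪u, x⟫ + c = t * (⟪u, x⟫ + c / t) := by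
        field_simp
      rw [h4, ← mul_pow, mul_max_of_nonneg _ _ ht0, mul_zero]
  · push_neg at hA
    by_cases hcsign : c ≤ 0
    · -- zero case
      refine rep_mem hd (ι := Fin 0) (fun j => j.elim0) (fun j => j.elim0) (fun j => j.elim0)
        (fun j => j.elim0) (fun j => j.elim0) hCpos ?_ g ?_
      · simp only [Finset.univ_eq_empty, Finset.sum_empty]
        linarith
      · refine hg.trans ?_
        filter_upwards [cube_ae d] with x hx
        rw [htarget x]
        have harg : ⟪v, x⟫ + c ≤ 0 := by
          rcases eq_or_lt_of_le ht0 with h0 | h0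
          · have : ⟪v, x⟫ = 0 := by rw [hinner x, ← h0, zero_mul]
            linarith
          · have h7 := hA h0
            have h5 : ⟪v, x⟫ ≤ t * Real.sqrt d := by
              rw [hinner x]
              exact mul_le_mul_of_nonneg_left ((le_abs_self _).trans (hiub x hx)) ht0
            have h6 : |c| = -c := abs_of_nonpos hcsign
            linarith
        rw [max_eq_left harg, zero_pow (by omega : k ≠ 0)]
        simp
    · push_neg at hcsign
      have habs_t : |t| ≤ 1 := by rw [abs_of_nonneg ht0]; exact ht1
      obtain ⟨a, ha, habound⟩ := hKsolve t c habs_t hc1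
      refine rep_mem hd (ι := Sum (Fin (k+1)) (Fin (k+1)))
        (Sum.elim (fun _ => u) (fun _ => -u))
        (Sum.elim (fun i => nodes k i) (fun i => -(nodes k i)))
        (Sum.elim (fun i => a i) (fun i => (-1:ℝ)^k * a i))
        ?_ ?_ hCpos ?_ g ?_
      · intro j
        cases j with
        | inl i => exact hu
        | inr i => rw [Sum.elim_inr, norm_neg]; exact hu
      · intro j
        cases j with
        | inl i => exact (nodes_mem i hk).trans hd1
        | inr i => rw [Sum.elim_inr, abs_neg]; exact (nodes_mem i hk).trans hd1
      · rw [Fintype.sum_sum_type]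
        simp only [Sum.elim_inl, Sum.elim_inr, abs_mul, abs_pow, abs_neg, abs_one,
          one_pow, one_mul]
        linarith
      · refine hg.trans ?_
        filter_upwards [cube_ae d] with x hx
        rw [htarget x]
        have harg : 0 ≤ ⟪v, x⟫ + c := by
          rcases eq_or_lt_of_le ht0 with h0 | h0
          · have : ⟪v, x⟫ = 0 := by rw [hinner x, ← h0, zero_mul]
            linarith
          · have h7 := hA h0
            have h8 := (abs_le.mp (hiub x hx)).1
            have h5 : t * -(Real.sqrt d) ≤ t * ⟪u, x⟫ := mul_le_mul_of_nonneg_left h8 ht0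
            have h9 : t * -(Real.sqrt d) = -(t * Real.sqrt d) := by ring
            have h6 : |c| = c := abs_of_pos hcsign
            rw [hinner x]
            linarith
        rw [max_eq_right harg, hinner x, poly_identity t c a ha ⟪u, x⟫,
          Fintype.sum_sum_type]
        simp only [Sum.elim_inl, Sum.elim_inr]
        rw [← Finset.sum_add_distrib]
        refine Finset.sum_congr rfl fun i _ => ?_
        have hneg : ⟪-u, x⟫ + -(nodes k i) = -(⟪u, x⟫ + nodes k i) := by
          rw [inner_neg_left]; ring
        rw [hneg, repu_id hk (⟪u, x⟫ + nodes k i)]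
        ring
end
end

section
/- Let H be a real normed vector space and f, f^δ, u ∈ H. Let δ, ε, P_f, P_u be nonnegative real numbers and λ > 0, and assume: ‖f − f^δ‖ ≤ δ, √λ · P_f = δ + √ε, and ‖u − f^δ‖² + λ·P_u² ≤ ‖f − f^δ‖² + λ·P_f² + ε. Then ‖f − u‖ ≤ 3·(δ + √ε) and P_u ≤ 2·P_f. -/
/-- Stability estimate for an `ε`-approximate minimizer of a Tikhonov functional
`g ↦ ‖g − f^δ‖² + λ P(g)²`: if `‖f − f^δ‖ ≤ δ`, `√λ P_f = δ + √ε`, and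
`‖u − f^δ‖² + λ P_u² ≤ ‖f − f^δ‖² + λ P_f² + ε`, then `‖f − u‖ ≤ 3(δ + √ε)` and
`P_u ≤ 2 P_f`. -/
theorem tikhonov_approx_minimizer_stability
    {H : Type*} [NormedAddCommGroup H] [NormedSpace ℝ H]
    (f fδ u : H) (δ ε Pf Pu : ℝ) (hδ : 0 ≤ δ) (hε : 0 ≤ ε) (hPf : 0 ≤ Pf) (hPu : 0 ≤ Pu)
    (lam : ℝ) (hlam : 0 < lam)
    (hnoise : ‖f - fδ‖ ≤ δ)
    (hchoice : Real.sqrt lam * Pf = δ + Real.sqrt ε)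
    (hmin : ‖u - fδ‖ ^ 2 + lam * Pu ^ 2 ≤ ‖f - fδ‖ ^ 2 + lam * Pf ^ 2 + ε) :
    ‖f - u‖ ≤ 3 * (δ + Real.sqrt ε) ∧ Pu ≤ 2 * Pf := by
  have hsε : 0 ≤ Real.sqrt ε := Real.sqrt_nonneg ε
  have hε' : Real.sqrt ε ^ 2 = ε := Real.sq_sqrt hε
  have hlam' : Real.sqrt lam ^ 2 = lam := Real.sq_sqrt hlam.le
  have hlP : lam * Pf ^ 2 = (δ + Real.sqrt ε) ^ 2 := by
    rw [← hchoice]; nlinarith [hlam']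
  have hnn : (0:ℝ) ≤ ‖u - fδ‖ := norm_nonneg _
  have hnn2 : (0:ℝ) ≤ ‖f - fδ‖ := norm_nonneg _
  have hub : ‖u - fδ‖ ^ 2 ≤ δ ^ 2 + (δ + Real.sqrt ε) ^ 2 + ε := by
    nlinarith [mul_nonneg hlam.le (mul_self_nonneg Pu)]
  have hle : ‖u - fδ‖ ≤ 2 * (δ + Real.sqrt ε) := by
    nlinarith [hub, hε', hnn]
  constructor
  · have htri : ‖f - u‖ ≤ ‖f - fδ‖ + ‖u - fδ‖ := by
      calc ‖f - u‖ = ‖(f - fδ) + (fδ - u)‖ := by abel_nf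
      _ ≤ ‖f - fδ‖ + ‖fδ - u‖ := norm_add_le _ _
      _ = ‖f - fδ‖ + ‖u - fδ‖ := by rw [norm_sub_rev fδ u]
    linarith
  · have : lam * Pu ^ 2 ≤ 4 * (lam * Pf ^ 2) := by
      nlinarith [sq_nonneg ‖u - fδ‖, hε']
    have h2 : Pu ^ 2 ≤ 4 * Pf ^ 2 :=
      le_of_mul_le_mul_left (by linarith) hlam
    nlinarith [h2, hPu, hPf]
end
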